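/- For every d ∈ (0, 1/2), the second-order differenced autocovariances γ_Z(h) = −|h+2|^{2d+1} + 4|h+1|^{2d+1} − 6|h|^{2d+1} + 4|h−1|^{2d+1} − |h−2|^{2d+1}, h ∈ ℤ, satisfy Σ_{h∈ℤ} γ_Z(h)² < ∞. -/

import Mathlib

/-!
For `h ≥ 2`, `γ_Z(h)` is minus the fourth forward difference of `t ↦ t ^ (2d+1)` at `h - 2`, and an
`n`-th forward difference is bounded by the supremum of the `n`-th derivative over the window it
spans. Hence `|γ_Z(h)| = O(h ^ (2d-3))`, so `γ_Z(h)² = O(h ^ (4d-6))` is summable over `h ≥ 0`,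
and `γ_Z` is even.
-/

open Real

/-- The (unnormalized) autocovariance of the differenced fractional noise with
parameter `d`: the fourth-order central difference of `h ↦ |h|^{2d+1}`. -/
noncomputable def diffFracAutocov (d : ℝ) (h : ℤ) : ℝ :=
  -|(h : ℝ) + 2| ^ (2 * d + 1) + 4 * |(h : ℝ) + 1| ^ (2 * d + 1)
    - 6 * |(h : ℝ)| ^ (2 * d + 1) + 4 * |(h : ℝ) - 1| ^ (2 * d + 1)
    - |(h : ℝ) - 2| ^ (2 * d + 1)

open Set fwdDiff

section FwdDiff

variable {E : Type*} [NormedAddCommGroup E] [NormedSpace ℝ E]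

theorem hasDerivAt_fwdDiff_iter {f f' : ℝ → E} {h t : ℝ} (n : ℕ)
    (hf : ∀ k ≤ n, HasDerivAt f (f' (t + k * h)) (t + k * h)) :
    HasDerivAt (Δ_[h] ^[n] f) (Δ_[h] ^[n] f' t) t := by
  induction n generalizing t with
  | zero => simpa using hf 0 le_rfl
  | succ n ih =>
    have hshift : HasDerivAt (Δ_[h] ^[n] f) (Δ_[h] ^[n] f' (t + h)) (t + h) :=
      ih fun k hk => by
        simpa [add_assoc, add_mul, add_comm h] using hf (k + 1) (by omega)
    have hbase := ih fun k hk => hf k (by omega)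
    rw [Function.iterate_succ']
    exact (hshift.comp_add_const t h).sub hbase

theorem norm_fwdDiff_iter_le {f : ℝ → E} {x h C : ℝ} (hh : 0 ≤ h) (n : ℕ)
    (hdiff : ∀ k < n, ∀ t ∈ Icc x (x + n * h), DifferentiableAt ℝ (deriv^[k] f) t)
    (hbound : ∀ t ∈ Icc x (x + n * h), ‖deriv^[n] f t‖ ≤ C) :
    ‖Δ_[h] ^[n] f x‖ ≤ C * h ^ n := by
  induction n generalizing f x with
  | zero => simpa using hbound x (by simp)
  | succ n ih =>
    have hderiv : ∀ t ∈ Icc x (x + h),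
        HasDerivAt (Δ_[h] ^[n] f) (Δ_[h] ^[n] (deriv f) t) t := by
      intro t ht
      refine hasDerivAt_fwdDiff_iter n fun k hk => (hdiff 0 (by omega) _ ⟨?_, ?_⟩).hasDerivAt
      · nlinarith [ht.1, (Nat.cast_nonneg k : (0 : ℝ) ≤ k)]
      · have : (k : ℝ) ≤ n := by exact_mod_cast hk
        push_cast; nlinarith [ht.2]
    have hbound' : ∀ t ∈ Ico x (x + h), ‖Δ_[h] ^[n] (deriv f) t‖ ≤ C * h ^ n := by
      intro t ht
      have hsub : Icc t (t + n * h) ⊆ Icc x (x + ↑(n + 1) * h) := by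
        refine Icc_subset_Icc ht.1 ?_
        push_cast; nlinarith [ht.2]
      refine ih (fun k hk s hs => ?_) (fun s hs => ?_)
      · rw [← Function.iterate_succ_apply]
        exact hdiff (k + 1) (by omega) s (hsub hs)
      · rw [← Function.iterate_succ_apply]
        exact hbound s (hsub hs)
    have := norm_image_sub_le_of_norm_deriv_le_segment'
      (fun t ht => (hderiv t ht).hasDerivWithinAt) hbound' (x + h) ⟨by linarith, le_rfl⟩
    rw [Function.iterate_succ_apply', fwdDiff]
    simpa [pow_succ, mul_assoc] using this

end FwdDiff

theorem diffFracAutocov_neg (d : ℝ) (h : ℤ) : diffFracAutocov d (-h) = diffFracAutocov d h := by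
  simp only [diffFracAutocov, Int.cast_neg]
  rw [show -(h : ℝ) + 2 = -((h : ℝ) - 2) by ring, show -(h : ℝ) + 1 = -((h : ℝ) - 1) by ring,
    show -(h : ℝ) - 1 = -((h : ℝ) + 1) by ring, show -(h : ℝ) - 2 = -((h : ℝ) + 2) by ring]
  simp only [abs_neg]
  ring

theorem diffFracAutocov_natCast_add_two (d : ℝ) (n : ℕ) :
    diffFracAutocov d (n + 2) = -Δ_[1] ^[4] (fun t : ℝ => t ^ (2 * d + 1)) n := by
  have hn : (0 : ℝ) ≤ n := n.cast_nonneg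
  rw [fwdDiff_iter_eq_sum_shift]
  simp only [diffFracAutocov, Finset.sum_range_succ, Finset.sum_range_zero]
  push_cast
  rw [abs_of_nonneg (by linarith), abs_of_nonneg (by linarith), abs_of_nonneg (by linarith),
    abs_of_nonneg (by linarith), abs_of_nonneg (by linarith)]
  norm_num [Nat.choose]
  ring_nf

theorem abs_diffFracAutocov_natCast_add_two_le {d : ℝ} (hd : d ≤ 3 / 2) {n : ℕ} (hn : 1 ≤ n) :
    |diffFracAutocov d (n + 2)| ≤
      |(descPochhammer ℝ 4).eval (2 * d + 1)| * (n : ℝ) ^ (2 * d - 3) := by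
  have hn₁ : (1 : ℝ) ≤ n := by exact_mod_cast hn
  have hderiv (k : ℕ) : deriv^[k] (fun t : ℝ => t ^ (2 * d + 1)) =
      fun t => (descPochhammer ℝ k).eval (2 * d + 1) * t ^ (2 * d + 1 - k) :=
    funext (iter_deriv_rpow_const _ · k)
  have hdiff : ∀ k < 4, ∀ t ∈ Icc (n : ℝ) (n + (4 : ℕ) * 1),
      DifferentiableAt ℝ (deriv^[k] fun t : ℝ => t ^ (2 * d + 1)) t := by
    intro k _ t ht
    rw [hderiv]
    exact (hasDerivAt_rpow_const (Or.inl (by linarith [ht.1]))).differentiableAt.const_mul _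
  have hbound : ∀ t ∈ Icc (n : ℝ) (n + (4 : ℕ) * 1),
      ‖deriv^[4] (fun t : ℝ => t ^ (2 * d + 1)) t‖ ≤
        |(descPochhammer ℝ 4).eval (2 * d + 1)| * (n : ℝ) ^ (2 * d - 3) := by
    intro t ht
    rw [hderiv, norm_mul, Real.norm_eq_abs, Real.norm_eq_abs,
      abs_of_nonneg (rpow_nonneg (by linarith [ht.1]) _), Nat.cast_ofNat,
      show 2 * d + 1 - 4 = 2 * d - 3 by ring]
    exact mul_le_mul_of_nonneg_left
      (rpow_le_rpow_of_nonpos (by linarith) ht.1 (by linarith)) (abs_nonneg _)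
  have hfwd := norm_fwdDiff_iter_le zero_le_one 4 hdiff hbound
  rwa [one_pow, mul_one, Real.norm_eq_abs, ← abs_neg, ← diffFracAutocov_natCast_add_two] at hfwd

theorem summable_diffFracAutocov_natCast_sq {d : ℝ} (hd : d < 5 / 4) :
    Summable fun n : ℕ => diffFracAutocov d n ^ 2 := by
  set c := (descPochhammer ℝ 4).eval (2 * d + 1)
  rw [← summable_nat_add_iff 2]
  refine Summable.of_norm_bounded_eventually_nat
    ((Real.summable_nat_rpow.2 (by linarith : 4 * d - 6 < -1)).mul_left (c ^ 2)) ?_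
  filter_upwards [Filter.eventually_ge_atTop 1] with n hn
  have hbound := abs_diffFracAutocov_natCast_add_two_le (d := d) (by linarith) hn
  push_cast
  calc ‖diffFracAutocov d (n + 2) ^ 2‖ = |diffFracAutocov d (n + 2)| ^ 2 := by simp
    _ ≤ (|c| * (n : ℝ) ^ (2 * d - 3)) ^ 2 := by gcongr
    _ = c ^ 2 * (n : ℝ) ^ (4 * d - 6) := by
      rw [mul_pow, sq_abs, ← rpow_natCast ((n : ℝ) ^ _), ← rpow_mul n.cast_nonneg]
      congr 2
      push_cast
      ring

/-- for every `d ∈ (0,1/2)`, the second-order differenced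
autocovariances are square summable: `∑_{h∈ℤ} γ_Z(h)² < ∞`. -/
theorem statement19 (d : ℝ) (hd : d ∈ Set.Ioo (0 : ℝ) (1 / 2)) :
    Summable (fun h : ℤ => diffFracAutocov d h ^ 2) := by
  have hnat := summable_diffFracAutocov_natCast_sq (d := d) (by linarith [hd.2])
  rw [summable_int_iff_summable_nat_and_neg]
  exact ⟨hnat, by simpa only [diffFracAutocov_neg] using hnat⟩
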